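/- arXiv:1306.4019 — 2 statements merged into one kernel-verified Lean document; each statement's English description precedes it below -/
import Mathlib

section
/- For Re(s) strictly between 1/2 and 1 and x > 0, the integral ∫₀^∞ u^{-s} (u + 2x)^{-s} du equals x^{1-2s} · Γ(1-s) Γ(s - 1/2) / (2√π). -/
/-!
Scaling `u = 2x t` turns the integral into `(2x)^(1-2s) ∫₀^∞ t^(-s) (1+t)^(-s) dt`, and the
substitution `t = v / (1 - v)` identifies the latter with the beta integral `B(1 - s, 2s - 1)`.
The Legendre duplication formula at `s - 1/2` then rewrites `Γ(2s - 1) / Γ(s)` as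
`2^(2s-2) Γ(s - 1/2) / √π`, and the powers of `2` cancel up to the factor `1/2`.
-/

open Complex MeasureTheory Set

lemma hasDerivAt_div_one_sub {v : ℝ} (hv : v ≠ 1) :
    HasDerivAt (fun v : ℝ => v / (1 - v)) ((1 - v) ^ 2)⁻¹ v :=
  ((hasDerivAt_id' v).fun_div ((hasDerivAt_id' v).const_sub 1) (sub_ne_zero.2 hv.symm)).congr_deriv
    (by ring)

lemma injOn_div_one_sub_Ioo : InjOn (fun v : ℝ => v / (1 - v)) (Ioo 0 1) := by
  rintro a ⟨-, ha⟩ b ⟨-, hb⟩ h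
  have : 1 - a ≠ 0 := (sub_pos.2 ha).ne'
  have : 1 - b ≠ 0 := (sub_pos.2 hb).ne'
  field_simp at h
  linarith

lemma image_div_one_sub_Ioo : (fun v : ℝ => v / (1 - v)) '' Ioo 0 1 = Ioi 0 := by
  ext t
  constructor
  · rintro ⟨v, ⟨hv0, hv1⟩, rfl⟩
    exact div_pos hv0 (sub_pos.2 hv1)
  · intro (ht : 0 < t)
    have h1t : 0 < 1 + t := by linarith
    refine ⟨t / (1 + t), ⟨by positivity, (div_lt_one h1t).2 (by linarith)⟩, ?_⟩
    field_simp
    ring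

lemma betaIntegral_integrand_eq_of_mem_Ioo (u w : ℂ) {v : ℝ} (hv : v ∈ Ioo 0 1) :
    (v : ℂ) ^ (u - 1) * (1 - (v : ℂ)) ^ (w - 1) =
      |((1 - v) ^ 2)⁻¹| • (((v / (1 - v) : ℝ) : ℂ) ^ (u - 1) *
        (1 + ((v / (1 - v) : ℝ) : ℂ)) ^ (-(u + w))) := by
  obtain ⟨hv0, hv1⟩ := hv
  have hv1' : 0 < 1 - v := sub_pos.2 hv1
  have h1t : 1 + ((v / (1 - v) : ℝ) : ℂ) = ((1 - v : ℝ) : ℂ)⁻¹ := by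
    rw [← ofReal_inv, ← ofReal_one, ← ofReal_add, one_add_div hv1'.ne']
    simp
  rw [h1t, ofReal_div, div_cpow_ofReal_nonneg hv0.le hv1'.le, inv_cpow_ofReal_nonneg hv1'.le,
    abs_of_pos (by positivity), real_smul, ← cpow_neg, neg_neg,
    show (1 : ℂ) - v = ((1 - v : ℝ) : ℂ) by push_cast; ring,
    show w - 1 = -(u - 1) + (u + w) + -2 by ring, ofReal_inv, ofReal_pow]
  have hW : ((1 - v : ℝ) : ℂ) ≠ 0 := ofReal_ne_zero.2 hv1'.ne'
  generalize ((1 - v : ℝ) : ℂ) = W at hW ⊢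
  rw [cpow_add _ _ hW, cpow_add _ _ hW, cpow_neg, cpow_neg, ← cpow_natCast]
  push_cast
  ring

theorem Complex.betaIntegral_eq_integral_Ioi (u w : ℂ) :
    betaIntegral u w = ∫ t in Ioi (0 : ℝ), (t : ℂ) ^ (u - 1) * (1 + (t : ℂ)) ^ (-(u + w)) := by
  rw [← image_div_one_sub_Ioo, integral_image_eq_integral_abs_deriv_smul measurableSet_Ioo
    (fun v hv => (hasDerivAt_div_one_sub hv.2.ne).hasDerivWithinAt) injOn_div_one_sub_Ioo,
    betaIntegral, intervalIntegral.integral_of_le zero_le_one, integral_Ioc_eq_integral_Ioo]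
  exact setIntegral_congr_fun measurableSet_Ioo fun v hv =>
    betaIntegral_integrand_eq_of_mem_Ioo u w hv

theorem integral_Ioi_cpow_mul_add_cpow (u w : ℂ) {c : ℝ} (hc : 0 < c) :
    ∫ t in Ioi (0 : ℝ), (t : ℂ) ^ (u - 1) * ((t : ℂ) + c) ^ (-(u + w)) =
      (c : ℂ) ^ (-w) * betaIntegral u w := by
  have hscale := integral_comp_mul_left_Ioi'
    (fun t : ℝ => (t : ℂ) ^ (u - 1) * ((t : ℂ) + c) ^ (-(u + w))) 0 hc
  rw [mul_zero] at hscale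
  rw [← hscale, betaIntegral_eq_integral_Ioi, ← integral_smul, ← integral_const_mul]
  refine setIntegral_congr_fun measurableSet_Ioi fun t (ht : 0 < t) => ?_
  have hcc : (c : ℂ) ≠ 0 := ofReal_ne_zero.2 hc.ne'
  rw [show ((c * t : ℝ) : ℂ) + c = ((c : ℝ) : ℂ) * ((1 + t : ℝ) : ℂ) by push_cast; ring, ofReal_mul,
    mul_cpow_ofReal_nonneg hc.le ht.le, mul_cpow_ofReal_nonneg hc.le (by positivity), real_smul,
    show -w = 1 + (u - 1) + -(u + w) by ring, cpow_add _ _ hcc, cpow_add _ _ hcc, cpow_one]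
  push_cast
  ring

theorem Complex.Gamma_two_mul (z : ℂ) :
    Gamma (2 * z) = 2 ^ (2 * z - 1) / Real.sqrt Real.pi * Gamma z * Gamma (z + 1 / 2) := by
  have hπ : (Real.sqrt Real.pi : ℂ) ≠ 0 := ofReal_ne_zero.2 (Real.sqrt_pos.2 Real.pi_pos).ne'
  have htwo : (2 : ℂ) ^ (2 * z - 1) * 2 ^ (1 - 2 * z) = 1 := by
    rw [← cpow_add _ _ two_ne_zero, sub_add_sub_cancel', sub_self, cpow_zero]
  rw [mul_assoc, Gamma_mul_Gamma_add_half]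
  field_simp
  linear_combination -Gamma (2 * z) * htwo

theorem integral_upow_mul_add_two_x_pow (s : ℂ) (hs1 : 1/2 < s.re) (hs2 : s.re < 1)
    (x : ℝ) (hx : 0 < x) :
    ∫ u in Ioi (0:ℝ), (u : ℂ) ^ (-s) * ((u : ℂ) + 2 * x) ^ (-s) =
      (x : ℂ) ^ (1 - 2 * s) * Complex.Gamma (1 - s) * Complex.Gamma (s - 1/2) /
        (2 * Real.sqrt Real.pi) := by
  have hbeta := integral_Ioi_cpow_mul_add_cpow (1 - s) (2 * s - 1) (by positivity : 0 < 2 * x)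
  rw [show 1 - s - 1 = -s by ring, show -(1 - s + (2 * s - 1)) = -s by ring,
    show -(2 * s - 1) = 1 - 2 * s by ring, ofReal_mul, ofReal_ofNat] at hbeta
  have hΓ : Gamma s ≠ 0 := Gamma_ne_zero_of_re_pos (by linarith)
  have htwo : (2 : ℂ) ^ (1 - 2 * s) * 2 ^ (2 * (s - 1 / 2) - 1) = 1 / 2 := by
    rw [← cpow_add _ _ two_ne_zero, show 1 - 2 * s + (2 * (s - 1 / 2) - 1) = -1 by ring,
      cpow_neg_one, one_div]
  rw [hbeta, betaIntegral_eq_Gamma_mul_div _ _ (by simpa using hs2)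
      (by simp only [sub_re, mul_re, re_ofNat, im_ofNat, zero_mul, sub_zero, one_re]; linarith),
    show 1 - s + (2 * s - 1) = s by ring, show 2 * s - 1 = 2 * (s - 1 / 2) by ring,
    Gamma_two_mul, sub_add_cancel, ← ofReal_ofNat, mul_cpow_ofReal_nonneg zero_le_two hx.le,
    ofReal_ofNat, mul_div_assoc, mul_div_cancel_right₀ _ hΓ]
  linear_combination
    (x : ℂ) ^ (1 - 2 * s) * Gamma (1 - s) * Gamma (s - 1 / 2) / Real.sqrt Real.pi * htwo
end

section
/- For x > 0 and τ in the upper half-plane, the theta-like function K(x,τ) = ∑_{(m,n) ∈ ℤ²} exp(-|m + nτ|² π x / τ₂) satisfies the Jacobi inversion formula K(x,τ) = x^{-1} K(x^{-1},τ), where τ₂ = Im τ. -/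
/-! Since `‖m + nτ‖² = (m + nτ₁)² + n²τ₂²`, Poisson summation in `m` for each fixed `n` gives
`K(x, τ) = √(τ₂ / x) · ∑_{n,k} exp(-πτ₂(x n² + k² / x) - 2πi τ₁ n k)`. The double sum is invariant
under `x ↦ x⁻¹` (swap `n` and `k`), and `√(τ₂ / x) = x⁻¹ √(τ₂ x)`. -/

open Complex Real

/-- The theta-like heat kernel on the torus. -/
noncomputable def torusK (x : ℝ) (τ : ℂ) : ℝ :=
  ∑' p : ℤ × ℤ, Real.exp (-(‖(p.1 : ℂ) + (p.2 : ℂ) * τ‖) ^ 2 * π * x / τ.im)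

lemma summable_exp_neg_mul_int_sq {c : ℝ} (hc : 0 < c) :
    Summable fun n : ℤ => rexp (-c * n ^ 2) := by
  have him : 0 < ((c / π : ℝ) * I : ℂ).im := by rw [mul_I_im, ofReal_re]; positivity
  convert ((summable_jacobiTheta₂_term_iff 0 _).2 him).norm using 2 with n
  rw [norm_jacobiTheta₂_term, mul_I_im, ofReal_re, zero_im]
  field_simp
  ring_nf

lemma summable_exp_neg_mul_sq_add_mul_sq {a b : ℝ} (ha : 0 < a) (hb : 0 < b) :
    Summable fun p : ℤ × ℤ => rexp (-(a * p.1 ^ 2 + b * p.2 ^ 2)) := by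
  simpa only [neg_add, Real.exp_add, neg_mul] using
    (summable_exp_neg_mul_int_sq ha).mul_of_nonneg (summable_exp_neg_mul_int_sq hb)
      (fun _ => (exp_pos _).le) (fun _ => (exp_pos _).le)

lemma sq_norm_ofReal_add_ofReal_mul (m n : ℝ) (τ : ℂ) :
    ‖(m : ℂ) + n * τ‖ ^ 2 = (m + n * τ.re) ^ 2 + (n * τ.im) ^ 2 := by
  rw [Complex.sq_norm, normSq_apply]
  simp only [add_re, add_im, mul_re, mul_im, ofReal_re, ofReal_im]
  ring

lemma im_sq_div_mul_le_sq_norm_ofReal_add_ofReal_mul (m n : ℝ) (τ : ℂ) :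
    τ.im ^ 2 / (1 + ‖τ‖ ^ 2) * (m ^ 2 + n ^ 2) ≤ ‖(m : ℂ) + n * τ‖ ^ 2 := by
  have hτ : ‖τ‖ ^ 2 = τ.re ^ 2 + τ.im ^ 2 := by rw [Complex.sq_norm, normSq_apply]; ring
  rw [sq_norm_ofReal_add_ofReal_mul, hτ, div_mul_eq_mul_div, div_le_iff₀ (by positivity)]
  nlinarith [sq_nonneg ((1 + τ.re ^ 2) * m + τ.re * (1 + τ.re ^ 2 + τ.im ^ 2) * n),
    sq_nonneg (τ.im ^ 2 * n), sq_nonneg (τ.im * m), sq_nonneg (τ.im * n), sq_nonneg m, sq_nonneg n]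

lemma summable_torusK_term {x : ℝ} (hx : 0 < x) {τ : ℂ} (hτ : 0 < τ.im) :
    Summable fun p : ℤ × ℤ => rexp (-(‖(p.1 : ℂ) + (p.2 : ℂ) * τ‖) ^ 2 * π * x / τ.im) := by
  have hc : 0 < τ.im ^ 2 / (1 + ‖τ‖ ^ 2) * π * x / τ.im := by positivity
  refine (summable_exp_neg_mul_sq_add_mul_sq hc hc).of_nonneg_of_le (fun _ => (exp_pos _).le)
    fun p => exp_le_exp.2 ?_
  have h := im_sq_div_mul_le_sq_norm_ofReal_add_ofReal_mul p.1 p.2 τ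
  push_cast at h
  rw [neg_mul, neg_mul, neg_div, neg_le_neg_iff, ← mul_add]
  refine le_of_eq_of_le ?_ ((mul_le_mul_of_nonneg_right h
    (by positivity : 0 ≤ π * x / τ.im)).trans_eq ?_) <;> ring

lemma tsum_exp_neg_div_mul_int_add_sq {a : ℂ} (ha : 0 < a.re) (b : ℂ) :
    ∑' m : ℤ, cexp (-π / a * (m + b) ^ 2) =
      a ^ (1 / 2 : ℂ) * ∑' k : ℤ, cexp (-π * a * k ^ 2 - 2 * π * I * b * k) := by
  have ha0 : a ^ (1 / 2 : ℂ) ≠ 0 := cpow_ne_zero_iff.2 (.inl (ne_zero_of_re_pos ha))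
  have h := Complex.tsum_exp_neg_quadratic ha (-I * b)
  simp only [show ∀ n : ℤ, (n : ℂ) + I * (-I * b) = n + b by intro n; ring_nf; simp [I_sq],
    show ∀ n : ℤ, -π * a * n ^ 2 + 2 * π * (-I * b) * n = -π * a * n ^ 2 - 2 * π * I * b * n by
      intro n; ring] at h
  rw [h, ← mul_assoc, mul_one_div_cancel ha0, one_mul]

noncomputable def torusKDualTerm (x : ℝ) (τ : ℂ) (q : ℤ × ℤ) : ℂ :=
  cexp (-π * τ.im * (x * q.1 ^ 2 + q.2 ^ 2 / x) - 2 * π * I * τ.re * q.1 * q.2)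

noncomputable def torusKDual (x : ℝ) (τ : ℂ) : ℂ :=
  ∑' q : ℤ × ℤ, torusKDualTerm x τ q

lemma torusKDual_inv (x : ℝ) (τ : ℂ) : torusKDual x⁻¹ τ = torusKDual x τ := by
  rw [torusKDual, ← (Equiv.prodComm ℤ ℤ).tsum_eq]
  refine tsum_congr fun q => ?_
  simp only [torusKDualTerm, Equiv.prodComm_apply, Prod.fst_swap, Prod.snd_swap, ofReal_inv, div_inv_eq_mul]
  ring_nf

lemma summable_torusKDual_term {x : ℝ} (hx : 0 < x) {τ : ℂ} (hτ : 0 < τ.im) :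
    Summable (torusKDualTerm x τ) := by
  refine .of_norm ((summable_exp_neg_mul_sq_add_mul_sq (a := π * τ.im * x) (b := π * τ.im / x)
    (by positivity) (by positivity)).congr fun q => ?_)
  rw [torusKDualTerm, show -π * τ.im * (x * q.1 ^ 2 + q.2 ^ 2 / x) - 2 * π * I * τ.re * q.1 * q.2 =
      ((-(π * τ.im * x * q.1 ^ 2 + π * τ.im / x * q.2 ^ 2) : ℝ) : ℂ) +
        ((-(2 * π * τ.re * q.1 * q.2) : ℝ) : ℂ) * I by push_cast; ring,
    Complex.norm_exp, add_re, ofReal_re, mul_I_re, ofReal_im, neg_zero, add_zero]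

lemma tsum_torusK_fiber {x : ℝ} (hx : 0 < x) {τ : ℂ} (hτ : 0 < τ.im) (n : ℤ) :
    ∑' m : ℤ, (rexp (-(‖(m : ℂ) + (n : ℂ) * τ‖) ^ 2 * π * x / τ.im) : ℂ) =
      √(τ.im / x) * ∑' k : ℤ, torusKDualTerm x τ (n, k) := by
  have hxc : (x : ℂ) ≠ 0 := ofReal_ne_zero.2 hx.ne'
  have htc : (τ.im : ℂ) ≠ 0 := ofReal_ne_zero.2 hτ.ne'
  have ha : 0 < ((τ.im / x : ℝ) : ℂ).re := by rw [ofReal_re]; positivity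
  have hsqrt : ((τ.im / x : ℝ) : ℂ) ^ (1 / 2 : ℂ) = √(τ.im / x) := by
    rw [sqrt_eq_rpow, ofReal_cpow (by positivity)]; norm_num
  have hpoisson := tsum_exp_neg_div_mul_int_add_sq ha (n * τ.re)
  rw [hsqrt] at hpoisson
  calc ∑' m : ℤ, (rexp (-(‖(m : ℂ) + (n : ℂ) * τ‖) ^ 2 * π * x / τ.im) : ℂ)
      = ∑' m : ℤ, cexp (-π / (τ.im / x : ℝ) * (m + n * τ.re) ^ 2) *
          cexp (-π * τ.im * x * n ^ 2) := tsum_congr fun m => by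
        have h := sq_norm_ofReal_add_ofReal_mul m n τ
        push_cast at h
        rw [ofReal_exp, ← Complex.exp_add, h]
        congr 1
        push_cast
        field_simp
        ring
    _ = √(τ.im / x) * ((∑' k : ℤ, cexp (-π * (τ.im / x : ℝ) * k ^ 2
          - 2 * π * I * (n * τ.re) * k)) * cexp (-π * τ.im * x * n ^ 2)) := by
        rw [tsum_mul_right, hpoisson, mul_assoc]
    _ = _ := by
        rw [← tsum_mul_right]
        congr 1
        refine tsum_congr fun k => ?_
        rw [torusKDualTerm, ← Complex.exp_add]
        congr 1
        push_cast
        field_simp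
        ring

lemma ofReal_torusK_eq_sqrt_mul_torusKDual {x : ℝ} (hx : 0 < x) {τ : ℂ} (hτ : 0 < τ.im) :
    (torusK x τ : ℂ) = √(τ.im / x) * torusKDual x τ := by
  have hF := summable_ofReal.2 (summable_torusK_term hx hτ)
  rw [torusK, ofReal_tsum, hF.tsum_prod, ← hF.tsum_comm, tsum_congr (tsum_torusK_fiber hx hτ),
    tsum_mul_left, torusKDual, (summable_torusKDual_term hx hτ).tsum_prod]

theorem jacobi_inversion (x : ℝ) (hx : 0 < x) (τ : ℂ) (hτ : 0 < τ.im) :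
    torusK x τ = x⁻¹ * torusK x⁻¹ τ := by
  have hsqrt : √(τ.im / x) = x⁻¹ * √(τ.im / x⁻¹) := by
    rw [div_inv_eq_mul, show τ.im / x = x⁻¹ ^ 2 * (τ.im * x) by field_simp,
      sqrt_mul (by positivity), sqrt_sq (by positivity)]
  rw [← ofReal_inj, ofReal_mul, ofReal_torusK_eq_sqrt_mul_torusKDual hx hτ,
    ofReal_torusK_eq_sqrt_mul_torusKDual (inv_pos.2 hx) hτ, torusKDual_inv, hsqrt]
  push_cast
  ring
end
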